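/- arXiv:2208.09682 — 2 statements merged into one kernel-verified Lean document; each statement's English description precedes it below -/
import Mathlib

section
/- Let R > 0, s ∈ (0,1), n ≥ 1, and let Ω ⊂ B_{3R/4} ∖ B_{R/4} be bounded. Define w(x) = 1 - e^{β(|x|² - R²)} for |x| ≤ R and w(x) = 0 otherwise. Then for β > 0 sufficiently large (depending on n, s, R), there exists α₀ > 0 such that -Δw(x) + (-Δ)^s w(x) ≥ α₀ for all x ∈ Ω, while w > 0 on Ω̄ and w ≥ 0 on ℝⁿ. -/
/-! Inside `B_R` the barrier is `1 - e^{β(|x|²-R²)}`, so `-Δw = 2β e^{β(|x|²-R²)} (2β|x|² + n)`.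
In the fractional term the second difference `w(x+z) + w(x-z) - 2w(x)` is nonpositive for
`|z| ≤ R/4` (convexity of `exp` and the parallelogram law) and at most `2e^{β(|x|²-R²)}` otherwise
(as `w ≤ 1`), so `(-Δ)ˢw(x) ≥ -C e^{β(|x|²-R²)}`, where `C` is the integral of `|z|^{-n-2s}`
outside `B_{R/4}`. Since `|x| ≥ R/4` on `Ω`, any `β ≥ 2√(C+1)/R` gives `4β²|x|² ≥ C + 1`, and then
`-Δw + (-Δ)ˢw ≥ e^{β(|x|²-R²)} ≥ e^{-βR²}`. -/

open Metric MeasureTheory Real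
open scoped RealInnerProductSpace

noncomputable def barrier {E : Type*} [Norm E] (β R : ℝ) (x : E) : ℝ :=
  if ‖x‖ ≤ R then 1 - exp (β * (‖x‖ ^ 2 - R ^ 2)) else 0

section Barrier

variable {E : Type*} [NormedAddCommGroup E] {β R : ℝ} {x : E}

theorem barrier_of_norm_le (hx : ‖x‖ ≤ R) : barrier β R x = 1 - exp (β * (‖x‖ ^ 2 - R ^ 2)) :=
  if_pos hx

theorem barrier_le_one (β R : ℝ) (x : E) : barrier β R x ≤ 1 := by
  unfold barrier
  split_ifs
  · linarith [exp_pos (β * (‖x‖ ^ 2 - R ^ 2))]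
  · exact zero_le_one

theorem barrier_nonneg (hβ : 0 ≤ β) (x : E) : 0 ≤ barrier β R x := by
  unfold barrier
  split_ifs with hx
  · have : ‖x‖ ^ 2 ≤ R ^ 2 := pow_le_pow_left₀ (norm_nonneg x) hx 2
    linarith [exp_le_one_iff.mpr (mul_nonpos_of_nonneg_of_nonpos hβ (sub_nonpos.mpr this))]
  · exact le_rfl

theorem barrier_pos (hβ : 0 < β) (hx : ‖x‖ < R) : 0 < barrier β R x := by
  have : ‖x‖ ^ 2 < R ^ 2 := pow_lt_pow_left₀ hx (norm_nonneg x) two_ne_zero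
  rw [barrier_of_norm_le hx.le]
  linarith [exp_lt_one_iff.mpr (mul_neg_of_pos_of_neg hβ (sub_neg.mpr this))]

end Barrier

section Laplacian

variable {E : Type*} [NormedAddCommGroup E] [InnerProductSpace ℝ E] {β R : ℝ}

theorem hasFDerivAt_exp_mul_norm_sq_sub (β R : ℝ) (y : E) :
    HasFDerivAt (fun y : E => exp (β * (‖y‖ ^ 2 - R ^ 2)))
      ((2 * β * exp (β * (‖y‖ ^ 2 - R ^ 2))) • innerSL ℝ y) y := by
  have hsq : HasFDerivAt (fun y : E => ‖y‖ ^ 2) ((2 : ℕ) • innerSL ℝ y) y := by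
    simpa using (hasFDerivAt_id y).norm_sq
  convert ((hsq.sub_const (R ^ 2)).const_mul β).exp using 1
  ext v
  simp only [smul_apply, coe_innerSL_apply, smul_eq_mul, nsmul_eq_mul, Nat.cast_ofNat]
  ring

theorem fderiv_barrier_apply {y : E} (hy : ‖y‖ < R) (v : E) :
    fderiv ℝ (barrier β R) y v = -(2 * β * exp (β * (‖y‖ ^ 2 - R ^ 2)) * ⟪y, v⟫) := by
  have hw : barrier β R =ᶠ[nhds y] fun y => 1 - exp (β * (‖y‖ ^ 2 - R ^ 2)) :=
    Filter.eventually_of_mem (isOpen_ball.mem_nhds (mem_ball_zero_iff.mpr hy))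
      fun z hz => barrier_of_norm_le (mem_ball_zero_iff.mp hz).le
  rw [hw.fderiv_eq, ((hasFDerivAt_exp_mul_norm_sq_sub β R y).const_sub 1).fderiv]
  simp

theorem fderiv_fderiv_barrier_apply_self {x : E} (hx : ‖x‖ < R) (v : E) :
    fderiv ℝ (fun y => fderiv ℝ (barrier β R) y v) x v
      = -(2 * β * exp (β * (‖x‖ ^ 2 - R ^ 2)) * (2 * β * ⟪x, v⟫ ^ 2 + ‖v‖ ^ 2)) := by
  have hw : (fun y => fderiv ℝ (barrier β R) y v) =ᶠ[nhds x]
      fun y => -(2 * β * exp (β * (‖y‖ ^ 2 - R ^ 2)) * ⟪y, v⟫) :=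
    Filter.eventually_of_mem (isOpen_ball.mem_nhds (mem_ball_zero_iff.mpr hx))
      fun z hz => fderiv_barrier_apply (mem_ball_zero_iff.mp hz) v
  have hd : HasFDerivAt (fun y => -(2 * β * exp (β * (‖y‖ ^ 2 - R ^ 2)) * ⟪y, v⟫)) _ x :=
    (((hasFDerivAt_exp_mul_norm_sq_sub β R x).const_mul (2 * β)).mul
      ((hasFDerivAt_id x).inner ℝ (hasFDerivAt_const v x))).neg
  rw [hw.fderiv_eq, hd.fderiv]
  simp only [id_eq, add_apply, neg_apply, smul_apply, coe_innerSL_apply, smul_eq_mul,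
    ContinuousLinearMap.comp_apply, ContinuousLinearMap.prod_apply, ContinuousLinearMap.id_apply,
    zero_apply, fderivInnerCLM_apply, inner_zero_right, real_inner_self_eq_norm_sq, zero_add]
  ring

theorem sum_fderiv_fderiv_barrier_orthonormalBasis {ι : Type*} [Fintype ι]
    (b : OrthonormalBasis ι ℝ E) {x : E} (hx : ‖x‖ < R) :
    ∑ i, fderiv ℝ (fun y => fderiv ℝ (barrier β R) y (b i)) x (b i)
      = -(2 * β * exp (β * (‖x‖ ^ 2 - R ^ 2)) * (2 * β * ‖x‖ ^ 2 + Fintype.card ι)) := by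
  simp only [fderiv_fderiv_barrier_apply_self hx, b.orthonormal.1, one_pow]
  rw [Finset.sum_neg_distrib, ← Finset.mul_sum, Finset.sum_add_distrib, ← Finset.mul_sum,
    b.sum_sq_inner_left]
  simp

end Laplacian

section SecondDifference

variable {E : Type*} [NormedAddCommGroup E] [InnerProductSpace ℝ E] {β R : ℝ}

theorem two_mul_exp_le_exp_add_exp {a b c : ℝ} (h : 2 * c ≤ a + b) :
    2 * exp c ≤ exp a + exp b := by
  have hconv := convexOn_exp.2 (Set.mem_univ a) (Set.mem_univ b) (by norm_num : (0 : ℝ) ≤ 1 / 2)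
    (by norm_num : (0 : ℝ) ≤ 1 / 2) (add_halves 1)
  simp only [smul_eq_mul] at hconv
  have : exp c ≤ exp (1 / 2 * a + 1 / 2 * b) := exp_le_exp.mpr (by linarith)
  linarith

theorem barrier_add_barrier_sub_le (hβ : 0 ≤ β) {x z : E} (hxz₁ : ‖x + z‖ ≤ R)
    (hxz₂ : ‖x - z‖ ≤ R) :
    barrier β R (x + z) + barrier β R (x - z) - 2 * barrier β R x ≤ 0 := by
  have hx : ‖x‖ ≤ R := by
    have h := norm_add_le (x + z) (x - z)
    rw [add_add_sub_cancel, ← two_smul ℝ x, norm_smul, norm_two] at h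
    linarith
  have hpar : ‖x + z‖ ^ 2 + ‖x - z‖ ^ 2 = 2 * ‖x‖ ^ 2 + 2 * ‖z‖ ^ 2 := by
    rw [norm_add_sq_real, norm_sub_sq_real]; ring
  have := two_mul_exp_le_exp_add_exp (c := β * (‖x‖ ^ 2 - R ^ 2))
    (a := β * (‖x + z‖ ^ 2 - R ^ 2)) (b := β * (‖x - z‖ ^ 2 - R ^ 2))
    (by nlinarith [mul_nonneg hβ (sq_nonneg ‖z‖)])
  rw [barrier_of_norm_le hxz₁, barrier_of_norm_le hxz₂, barrier_of_norm_le hx]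
  linarith

end SecondDifference

theorem integral_le_integral_of_le_of_integral_nonneg {α : Type*} [MeasurableSpace α]
    {μ : Measure α} {f g : α → ℝ} (hg : Integrable g μ) (hg₀ : 0 ≤ ∫ a, g a ∂μ) (hfg : f ≤ g) :
    ∫ a, f a ∂μ ≤ ∫ a, g a ∂μ := by
  -- `∫ f` is `0` when `f` is not integrable, so only `g` needs to be integrable.
  by_cases hf : Integrable f μ
  · exact integral_mono hf hg hfg
  · rwa [integral_undef hf]

theorem integrableOn_compl_closedBall_inv_norm_rpow {E : Type*} [NormedAddCommGroup E]
    [NormedSpace ℝ E] [FiniteDimensional ℝ E] [MeasurableSpace E] [BorelSpace E]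
    (μ : Measure E) [μ.IsAddHaarMeasure] {ρ p : ℝ} (hρ : 0 < ρ)
    (hp : (Module.finrank ℝ E : ℝ) < p) :
    IntegrableOn (fun z : E => (‖z‖ ^ p)⁻¹) (closedBall 0 ρ)ᶜ μ := by
  refine ((integrable_one_add_norm hp).const_mul ((1 + ρ⁻¹) ^ p)).integrableOn.mono'
    (by fun_prop : Measurable fun z : E => (‖z‖ ^ p)⁻¹).aestronglyMeasurable
    (ae_restrict_of_forall_mem measurableSet_closedBall.compl fun z hz => ?_)
  have hz : ρ < ‖z‖ := by simpa using hz
  have hz₀ : 0 < ‖z‖ := hρ.trans hz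
  have hle : 1 + ‖z‖ ≤ (1 + ρ⁻¹) * ‖z‖ := by
    have : 1 ≤ ρ⁻¹ * ‖z‖ := by rw [inv_mul_eq_div, one_le_div hρ]; exact hz.le
    linarith
  rw [norm_inv, norm_of_nonneg (by positivity), rpow_neg (by positivity)]
  calc (‖z‖ ^ p)⁻¹ = (1 + ρ⁻¹) ^ p * (((1 + ρ⁻¹) * ‖z‖) ^ p)⁻¹ := by
        rw [mul_rpow (by positivity) hz₀.le, mul_inv, mul_inv_cancel_left₀ (by positivity)]
    _ ≤ (1 + ρ⁻¹) ^ p * ((1 + ‖z‖) ^ p)⁻¹ := by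
        have hp₀ : 0 ≤ p := (Nat.cast_nonneg _).trans hp.le
        gcongr

section FractionalLaplacian

variable {E : Type*} [NormedAddCommGroup E] [InnerProductSpace ℝ E] {β R ρ p : ℝ} {x : E}

theorem barrier_add_barrier_sub_div_le (hβ : 0 ≤ β) (hρ : 0 ≤ ρ) (hx : ‖x‖ + ρ ≤ R) (z : E) :
    (barrier β R (x + z) + barrier β R (x - z) - 2 * barrier β R x) / ‖z‖ ^ p
      ≤ 2 * exp (β * (‖x‖ ^ 2 - R ^ 2)) *
          (closedBall (0 : E) ρ)ᶜ.indicator (fun z => (‖z‖ ^ p)⁻¹) z := by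
  by_cases hz : ‖z‖ ≤ ρ
  · rw [Set.indicator_of_notMem (by simpa using hz), mul_zero]
    refine div_nonpos_of_nonpos_of_nonneg (barrier_add_barrier_sub_le hβ ?_ ?_) (by positivity)
    · linarith [norm_add_le x z]
    · linarith [norm_sub_le x z]
  · rw [Set.indicator_of_mem (by simpa using hz), ← div_eq_mul_inv]
    refine div_le_div_of_nonneg_right ?_ (by positivity)
    rw [barrier_of_norm_le (x := x) (by linarith)]
    linarith [barrier_le_one β R (x + z), barrier_le_one β R (x - z)]

theorem integral_barrier_add_barrier_sub_div_le [FiniteDimensional ℝ E] [MeasurableSpace E]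
    [BorelSpace E] (μ : Measure E) [μ.IsAddHaarMeasure] (hβ : 0 ≤ β) (hρ : 0 < ρ)
    (hp : (Module.finrank ℝ E : ℝ) < p) (hx : ‖x‖ + ρ ≤ R) :
    ∫ z, (barrier β R (x + z) + barrier β R (x - z) - 2 * barrier β R x) / ‖z‖ ^ p ∂μ
      ≤ 2 * exp (β * (‖x‖ ^ 2 - R ^ 2)) * ∫ z in (closedBall 0 ρ)ᶜ, (‖z‖ ^ p)⁻¹ ∂μ := by
  have hint := (integrableOn_compl_closedBall_inv_norm_rpow μ hρ hp).integrable_indicator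
    measurableSet_closedBall.compl
  rw [← integral_indicator measurableSet_closedBall.compl, ← integral_const_mul]
  refine integral_le_integral_of_le_of_integral_nonneg (hint.const_mul _)
    (integral_nonneg fun z => ?_) (barrier_add_barrier_sub_div_le hβ hρ.le hx)
  exact mul_nonneg (by positivity) (Set.indicator_nonneg (fun z _ => by positivity) z)

end FractionalLaplacian

theorem barrier_supersolution_general
    (n : ℕ) (s R : ℝ) (hs0 : 0 < s) (hR : 0 < R)
    (Ω : Set (EuclideanSpace ℝ (Fin n)))
    (hΩ : Ω ⊆ ball (0 : EuclideanSpace ℝ (Fin n)) (3 * R / 4) \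
      ball (0 : EuclideanSpace ℝ (Fin n)) (R / 4)) :
    ∃ β₀ > (0 : ℝ), ∀ β ≥ β₀,
      ∀ w : EuclideanSpace ℝ (Fin n) → ℝ,
        (∀ x, w x = if ‖x‖ ≤ R then 1 - Real.exp (β * (‖x‖ ^ 2 - R ^ 2)) else 0) →
        ∃ α₀ > (0 : ℝ),
          (∀ x ∈ Ω,
            -(∑ i : Fin n,
                fderiv ℝ (fun y => fderiv ℝ w y (EuclideanSpace.single i 1)) x
                  (EuclideanSpace.single i 1)) +
              -(1 / 2) * ∫ z : EuclideanSpace ℝ (Fin n),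
                (w (x + z) + w (x - z) - 2 * w x) / ‖z‖ ^ ((n : ℝ) + 2 * s)
            ≥ α₀) ∧
          (∀ x ∈ closure Ω, 0 < w x) ∧ (∀ x, 0 ≤ w x) := by
  set c := ∫ z in (closedBall (0 : EuclideanSpace ℝ (Fin n)) (R / 4))ᶜ,
    (‖z‖ ^ ((n : ℝ) + 2 * s))⁻¹
  have hc : 0 ≤ c := setIntegral_nonneg measurableSet_closedBall.compl fun z _ => by positivity
  refine ⟨2 * √(c + 1) / R, by positivity, fun β hβ w hw => ?_⟩
  obtain rfl : w = barrier β R := funext hw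
  have hβ₀ : 0 < β := lt_of_lt_of_le (by positivity) hβ
  refine ⟨exp (-(β * R ^ 2)), exp_pos _, fun x hx => ?_,
    fun x hx => barrier_pos hβ₀ ?_, barrier_nonneg hβ₀.le⟩
  · obtain ⟨hx_lt, hx_ge⟩ : ‖x‖ < 3 * R / 4 ∧ R / 4 ≤ ‖x‖ := by simpa using hΩ hx
    have hI := integral_barrier_add_barrier_sub_div_le (R := R) (ρ := R / 4) (p := n + 2 * s)
      (x := x) volume hβ₀.le (by positivity) (by simp; linarith) (by linarith)
    have hΔ := sum_fderiv_fderiv_barrier_orthonormalBasis (EuclideanSpace.basisFun (Fin n) ℝ)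
      (β := β) (by linarith : ‖x‖ < R)
    simp only [EuclideanSpace.basisFun_apply, Fintype.card_fin] at hΔ
    rw [hΔ]
    have hβx : c + 1 ≤ (2 * β * ‖x‖) ^ 2 := by
      rw [ge_iff_le, div_le_iff₀ hR] at hβ
      exact (sqrt_le_iff.mp (by nlinarith)).2
    have hexp : exp (-(β * R ^ 2)) ≤ exp (β * (‖x‖ ^ 2 - R ^ 2)) :=
      exp_le_exp.mpr (by nlinarith)
    have hdom := mul_le_mul_of_nonneg_left hβx (exp_pos (β * (‖x‖ ^ 2 - R ^ 2))).le
    have hn : 0 ≤ exp (β * (‖x‖ ^ 2 - R ^ 2)) * β * n := by positivity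
    linarith
  · have hΩR : Ω ⊆ closedBall 0 (3 * R / 4) := fun y hy => ball_subset_closedBall (hΩ hy).1
    have := mem_closedBall_zero_iff.mp (closure_minimal hΩR isClosed_closedBall hx)
    linarith

/-- For `β` large enough (depending on `n, s, R`), the barrier
`w(x) = 1 - e^{β(|x|²-R²)}` on `B_R` (extended by `0`) satisfies
`-Δw + (-Δ)ˢ w ≥ α₀ > 0` on `Ω ⊂ B_{3R/4} ∖ B_{R/4}`, with `w > 0` on `Ω̄`
and `w ≥ 0` on `ℝⁿ`. -/
theorem barrier_supersolution
    (n : ℕ) (hn : 1 ≤ n) (s R : ℝ) (hs0 : 0 < s) (hs1 : s < 1) (hR : 0 < R)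
    (Ω : Set (EuclideanSpace ℝ (Fin n)))
    (hΩ : Ω ⊆ ball (0 : EuclideanSpace ℝ (Fin n)) (3 * R / 4) \
      ball (0 : EuclideanSpace ℝ (Fin n)) (R / 4))
    (hΩbdd : Bornology.IsBounded Ω) :
    ∃ β₀ > (0 : ℝ), ∀ β ≥ β₀,
      ∀ w : EuclideanSpace ℝ (Fin n) → ℝ,
        (∀ x, w x = if ‖x‖ ≤ R then 1 - Real.exp (β * (‖x‖ ^ 2 - R ^ 2)) else 0) →
        ∃ α₀ > (0 : ℝ),
          (∀ x ∈ Ω,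
            -(∑ i : Fin n,
                fderiv ℝ (fun y => fderiv ℝ w y (EuclideanSpace.single i 1)) x
                  (EuclideanSpace.single i 1)) +
              -(1 / 2) * ∫ z : EuclideanSpace ℝ (Fin n),
                (w (x + z) + w (x - z) - 2 * w x) / ‖z‖ ^ ((n : ℝ) + 2 * s)
            ≥ α₀) ∧
          (∀ x ∈ closure Ω, 0 < w x) ∧ (∀ x, 0 ≤ w x) :=
  barrier_supersolution_general n s R hs0 hR Ω hΩ
end

section
/- Let X be a Banach space, A: D(A) ⊂ X → X and B: D(A) → X linear operators such that for each λ ≥ λ₀ and f ∈ X the equation Au + λu = f has a unique solution u ∈ D(A) with ‖u‖_{D(A)} ≤ C‖f‖ and (λ - λ₀)‖u‖ ≤ C‖f‖, and such that ‖Bw‖ ≤ C(ε‖w‖_{D(A)} + τ(ε)‖w‖) for all ε > 0. Then there exists λ₁ ≥ λ₀ such that for all λ ≥ λ₁ and all f ∈ X, the equation Au + Bu + λu = f has a unique solution u ∈ D(A). -/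
/-!
Write `S = A + λ ι`, which is bijective for `λ ≥ λ₀`. The resolvent estimates, applied to
`f = S u`, together with the bound on `B` for `ε = 1/(4C²)` give `‖B u‖ ≤ ‖S u‖ / 2` as soon as
`λ ≥ λ₀ + 4C²τ`. Then `B S⁻¹` is a bounded operator on `X` of norm at most `1/2`, so
`S + B = (1 + B S⁻¹) S` is bijective by the Neumann series.
-/

theorem LinearMap.bijective_add_of_norm_le_mul {𝕜 D X : Type*} [NontriviallyNormedField 𝕜]
    [AddCommGroup D] [Module 𝕜 D] [NormedAddCommGroup X] [NormedSpace 𝕜 X] [CompleteSpace X]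
    {S B : D →ₗ[𝕜] X} (hS : Function.Bijective S) {q : ℝ} (hq : q < 1)
    (hB : ∀ u, ‖B u‖ ≤ q * ‖S u‖) : Function.Bijective (S + B) := by
  let S' := LinearEquiv.ofBijective S hS
  let K : X →L[𝕜] X := (B ∘ₗ S'.symm.toLinearMap).mkContinuous q fun f => by
    simpa [S'] using hB (S'.symm f)
  have hK : ‖-K‖ < 1 := by
    rw [norm_neg]
    exact (mkContinuous_norm_le' _ _).trans_lt (max_lt hq one_pos)
  let U := ContinuousLinearEquiv.unitsEquiv 𝕜 X (Units.oneSub (-K) hK)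
  have hSB : ⇑(S + B) = U ∘ S := by
    ext u
    simp [U, K, S']
  rw [hSB]
  exact U.bijective.comp hS

theorem norm_apply_le_half_of_resolvent_estimates {D X : Type*} [SeminormedAddCommGroup D]
    [Module ℝ D] [SeminormedAddCommGroup X] [Module ℝ X] (ι A B : D →ₗ[ℝ] X)
    {lam₀ lam C τ : ℝ} (hC : 0 < C) (hlam : lam₀ + 4 * C ^ 2 * τ ≤ lam)
    (hest : ∀ u, ‖u‖ ≤ C * ‖A u + lam • ι u‖ ∧ (lam - lam₀) * ‖ι u‖ ≤ C * ‖A u + lam • ι u‖)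
    (hB : ∀ w, ‖B w‖ ≤ C * ((4 * C ^ 2)⁻¹ * ‖w‖ + τ * ‖ι w‖)) (u : D) :
    ‖B u‖ ≤ 2⁻¹ * ‖A u + lam • ι u‖ := by
  set f := ‖A u + lam • ι u‖
  obtain ⟨hu, hιu⟩ := hest u
  have hε : C * ((4 * C ^ 2)⁻¹ * ‖u‖) ≤ 4⁻¹ * f :=
    calc C * ((4 * C ^ 2)⁻¹ * ‖u‖) ≤ C * ((4 * C ^ 2)⁻¹ * (C * f)) := by gcongr
      _ = 4⁻¹ * f := by field_simp
  have hτ : C * (τ * ‖ι u‖) ≤ 4⁻¹ * f := by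
    have : C * (4 * C * τ * ‖ι u‖) ≤ C * f :=
      calc C * (4 * C * τ * ‖ι u‖) = 4 * C ^ 2 * τ * ‖ι u‖ := by ring
        _ ≤ (lam - lam₀) * ‖ι u‖ := by gcongr; linarith
        _ ≤ C * f := hιu
    linarith [le_of_mul_le_mul_left this hC]
  linarith [hB u]

theorem abstract_perturbation_solvability_general
    (X D : Type*)
    [NormedAddCommGroup X] [NormedSpace ℝ X] [CompleteSpace X]
    [NormedAddCommGroup D] [NormedSpace ℝ D]
    (ι : D →ₗ[ℝ] X)
    (A B : D →ₗ[ℝ] X) (lam₀ C : ℝ) (hC : 0 < C)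
    (hsolve : ∀ lam ≥ lam₀, ∀ f : X, ∃! u : D, A u + lam • ι u = f)
    (hest : ∀ lam ≥ lam₀, ∀ f : X, ∀ u : D, A u + lam • ι u = f →
      ‖u‖ ≤ C * ‖f‖ ∧ (lam - lam₀) * ‖ι u‖ ≤ C * ‖f‖)
    (hB : ∀ ε > (0 : ℝ), ∃ τ > (0 : ℝ), ∀ w : D,
      ‖B w‖ ≤ C * (ε * ‖w‖ + τ * ‖ι w‖)) :
    ∃ lam₁ ≥ lam₀, ∀ lam ≥ lam₁, ∀ f : X,
      ∃! u : D, A u + B u + lam • ι u = f := by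
  obtain ⟨τ, hτ, hBτ⟩ := hB (4 * C ^ 2)⁻¹ (by positivity)
  have hlam₁ : lam₀ ≤ lam₀ + 4 * C ^ 2 * τ := le_add_of_nonneg_right (by positivity)
  refine ⟨lam₀ + 4 * C ^ 2 * τ, hlam₁, fun lam hlam => ?_⟩
  have hlam₀ : lam₀ ≤ lam := hlam₁.trans hlam
  have hS : Function.Bijective (A + lam • ι) :=
    (Function.bijective_iff_existsUnique _).2 (hsolve lam hlam₀)
  have hSB := (A + lam • ι).bijective_add_of_norm_le_mul hS (by norm_num : (2⁻¹ : ℝ) < 1)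
    (norm_apply_le_half_of_resolvent_estimates ι A B hC hlam (fun u => hest lam hlam₀ _ u rfl) hBτ)
  simpa only [LinearMap.add_apply, LinearMap.smul_apply, add_right_comm]
    using (Function.bijective_iff_existsUnique _).1 hSB

/-- Abstract perturbation lemma (Banach fixed point): if `A + λ` is uniquely solvable
with the resolvent estimates `‖u‖_{D(A)} ≤ C‖f‖` and `(λ-λ₀)‖u‖ ≤ C‖f‖`, and the
perturbation `B` satisfies `‖Bw‖ ≤ C(ε ‖w‖_{D(A)} + τ(ε) ‖w‖)` for every `ε > 0`,
then `A + B + λ` is uniquely solvable for all `λ` large enough. -/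
theorem abstract_perturbation_solvability
    (X D : Type*)
    [NormedAddCommGroup X] [NormedSpace ℝ X] [CompleteSpace X]
    [NormedAddCommGroup D] [NormedSpace ℝ D] [CompleteSpace D]
    (ι : D →ₗ[ℝ] X) (hι : Function.Injective ι)
    (A B : D →ₗ[ℝ] X) (lam₀ C : ℝ) (hC : 0 < C)
    (hsolve : ∀ lam ≥ lam₀, ∀ f : X, ∃! u : D, A u + lam • ι u = f)
    (hest : ∀ lam ≥ lam₀, ∀ f : X, ∀ u : D, A u + lam • ι u = f →
      ‖u‖ ≤ C * ‖f‖ ∧ (lam - lam₀) * ‖ι u‖ ≤ C * ‖f‖)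
    (hB : ∀ ε > (0 : ℝ), ∃ τ > (0 : ℝ), ∀ w : D,
      ‖B w‖ ≤ C * (ε * ‖w‖ + τ * ‖ι w‖)) :
    ∃ lam₁ ≥ lam₀, ∀ lam ≥ lam₁, ∀ f : X,
      ∃! u : D, A u + B u + lam • ι u = f :=
  abstract_perturbation_solvability_general X D ι A B lam₀ C hC hsolve hest hB
end
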